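/- arXiv:0909.5676 — 5 statements merged into one kernel-verified Lean document; each statement's English description precedes it below -/
import Mathlib

section
/- Let V be a vector space of even dimension over any field K, and let ω be an alternating trilinear form on V. Then every one-dimensional subspace of V is contained in a two-dimensional subspace U of V that is singular for ω, i.e. ω(u,u',v)=0 for all u,u' ∈ U and v ∈ V. -/
/-!
Fix `u ≠ 0`. The form `B_u(x, y) = ω(u, x, y)` is alternating and `u` lies in its kernel.
Its restriction to a complement of `K ∙ u` is an alternating form on an odd-dimensional space,
hence degenerate, so there is `w ∉ K ∙ u` with `ω(u, w, ·) = 0`. For each `v`, the alternating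
form `ω(v, ·, ·)` then vanishes on the pair `u, w`, hence on all of `U = span {u, w}`.
-/

open Matrix Module Submodule

theorem Matrix.det_sub_transpose_eq_zero {n R : Type*} [Fintype n] [DecidableEq n] [CommRing R]
    (hn : Odd (Fintype.card n)) (A : Matrix n n R) : (A - Aᵀ).det = 0 := by
  -- Over `ℤ[X_ij]`, which has characteristic zero, `det = -det` forces `det = 0`; specializing
  -- the generic matrix to `A` then covers every characteristic, including two.
  set X := mvPolynomialX n n ℤ
  have hX : (X - Xᵀ).det = 0 := by
    have h : (X - Xᵀ).det = -(X - Xᵀ).det := by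
      conv_lhs => rw [← det_transpose]
      rw [transpose_sub, transpose_transpose, ← neg_sub, det_neg, hn.neg_one_pow, neg_one_mul]
    exact CharZero.eq_neg_self_iff.mp h
  set f := MvPolynomial.aeval (R := ℤ) fun p : n × n => A p.1 p.2
  have hA : f.mapMatrix X = A := mvPolynomialX_mapMatrix_aeval ℤ A
  have hAT : f.mapMatrix Xᵀ = Aᵀ := by rw [← hA]; rfl
  rw [← hAT, ← hA, ← map_sub, ← AlgHom.map_det, hX, map_zero]

theorem Matrix.det_eq_zero_of_transpose_eq_neg {n R : Type*} [Fintype n] [LinearOrder n]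
    [CommRing R] (hn : Odd (Fintype.card n)) {A : Matrix n n R} (hA : Aᵀ = -A)
    (hdiag : ∀ i, A i i = 0) : A.det = 0 := by
  set U : Matrix n n R := of fun i j => if i < j then A i j else 0
  suffices A = U - Uᵀ by rw [this]; exact det_sub_transpose_eq_zero hn U
  ext i j
  have hji : A j i = -A i j := congrFun (congrFun hA i) j
  rcases lt_trichotomy i j with h | rfl | h
  · simp [U, h, h.not_gt]
  · simp [U, hdiag]
  · simp [U, h, h.not_gt, hji]

namespace LinearMap.BilinForm

theorem IsAlt.apply_eq_zero_of_mem_span_pair {R M : Type*} [CommRing R]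
    [AddCommGroup M] [Module R M] {B : LinearMap.BilinForm R M} (hB : B.IsAlt) {x y a b : M}
    (hxy : B x y = 0) (ha : a ∈ span R {x, y}) (hb : b ∈ span R {x, y}) : B a b = 0 := by
  obtain ⟨a₁, a₂, rfl⟩ := mem_span_pair.mp ha
  obtain ⟨b₁, b₂, rfl⟩ := mem_span_pair.mp hb
  have hyx : B y x = 0 := by rw [← hB.neg_eq, hxy, neg_zero]
  simp [hxy, hyx, hB.self_eq_zero]

variable {K V : Type*} [Field K] [AddCommGroup V] [Module K V] {B : LinearMap.BilinForm K V}

theorem IsAlt.ker_ne_bot [FiniteDimensional K V] (hB : B.IsAlt) (hodd : Odd (finrank K V)) :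
    LinearMap.ker B ≠ ⊥ := by
  let b := finBasis K V
  rw [Ne, ← nondegenerate_iff_ker_eq_bot, nondegenerate_iff_det_ne_zero b, not_not]
  refine det_eq_zero_of_transpose_eq_neg (by simpa using hodd) ?_ fun i => ?_
  · ext i j
    rw [transpose_apply, Matrix.neg_apply, toMatrix_apply, toMatrix_apply, hB.neg_eq]
  · rw [toMatrix_apply, hB.self_eq_zero]

theorem IsAlt.exists_mem_ker_notMem_span_singleton [FiniteDimensional K V] (hB : B.IsAlt)
    (heven : Even (finrank K V)) {u : V} (hu : u ≠ 0) (huB : u ∈ LinearMap.ker B) :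
    ∃ w ∈ LinearMap.ker B, w ∉ K ∙ u := by
  obtain ⟨C, hC⟩ := (K ∙ u).exists_isCompl
  have hCodd : Odd (finrank K C) := by
    have h := Submodule.finrank_add_eq_of_isCompl hC
    rw [finrank_span_singleton hu] at h
    obtain ⟨k, hk⟩ := heven
    exact ⟨k - 1, by omega⟩
  have hBC : (B.restrict C).IsAlt := fun x => hB x
  obtain ⟨c, hcC, hc⟩ := (Submodule.ne_bot_iff _).mp (hBC.ker_ne_bot hCodd)
  refine ⟨c, ?_, fun hcu => hc (Subtype.ext (disjoint_def.mp hC.disjoint c hcu c.2))⟩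
  ext v
  obtain ⟨p, hp, q, hq, rfl⟩ := mem_sup.mp (hC.sup_eq_top ▸ mem_top : v ∈ (K ∙ u) ⊔ C)
  obtain ⟨a, rfl⟩ := mem_span_singleton.mp hp
  have hcu : B c u = 0 := by
    rw [← hB.neg_eq, LinearMap.mem_ker.mp huB, LinearMap.zero_apply, neg_zero]
  have hcq : B c q = 0 := LinearMap.congr_fun (LinearMap.mem_ker.mp hcC) ⟨q, hq⟩
  simp [hcu, hcq]

end LinearMap.BilinForm

namespace AlternatingMap

variable {R M N : Type*} [CommRing R] [AddCommGroup M] [Module R M] [AddCommGroup N] [Module R N]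

theorem map_vecCons_rotate (f : M [⋀^Fin 3]→ₗ[R] N) (x y z : M) :
    f ![x, y, z] = f ![z, x, y] :=
  calc f ![x, y, z] = f (![z, x, y] ∘ finRotate 3) := by
        congr 1; funext i; fin_cases i <;> rfl
    _ = f ![z, x, y] := by simp [f.map_perm, sign_finRotate]

def toBilinForm (f : M [⋀^Fin 2]→ₗ[R] R) : LinearMap.BilinForm R M :=
  LinearMap.mk₂ R (fun x y => f ![x, y]) (fun _ _ _ => f.map_vecCons_add _ _ _)
    (fun _ _ _ => f.map_vecCons_smul _ _ _) (fun x _ _ => (f.curryLeft x).map_vecCons_add _ _ _)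
    (fun _ x _ => (f.curryLeft x).map_vecCons_smul _ _ _)

theorem isAlt_toBilinForm (f : M [⋀^Fin 2]→ₗ[R] R) : f.toBilinForm.IsAlt :=
  fun x => f.map_eq_zero_of_eq ![x, x] (i := 0) (j := 1) rfl (by decide)

end AlternatingMap

theorem stmt0_general {K V : Type*} [Field K] [AddCommGroup V] [Module K V]
    [FiniteDimensional K V] (heven : Even (Module.finrank K V))
    (ω : AlternatingMap K V K (Fin 3)) (u : V) (hu : u ≠ 0) :
    ∃ U : Submodule K V, Module.finrank K U = 2 ∧ u ∈ U ∧
      ∀ x ∈ U, ∀ y ∈ U, ∀ v : V, ω ![x, y, v] = 0 := by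
  have huB : u ∈ LinearMap.ker (ω.curryLeft u).toBilinForm :=
    LinearMap.ext fun v => ω.map_eq_zero_of_eq ![u, u, v] (i := 0) (j := 1) rfl (by decide)
  obtain ⟨w, hwB, hwu⟩ :=
    (ω.curryLeft u).isAlt_toBilinForm.exists_mem_ker_notMem_span_singleton heven hu huB
  have hli : LinearIndependent K ![u, w] :=
    (LinearIndependent.pair_iff' hu).mpr fun a h => hwu (mem_span_singleton.mpr ⟨a, h⟩)
  refine ⟨span K {u, w}, ?_, subset_span (by simp), fun x hx y hy v => ?_⟩
  · rw [← Matrix.range_cons_cons_empty u w ![], finrank_span_eq_card hli, Fintype.card_fin]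
  · have hvuw : ω ![v, u, w] = 0 := by
      rw [← ω.map_vecCons_rotate]
      exact LinearMap.congr_fun hwB v
    rw [ω.map_vecCons_rotate]
    exact (ω.curryLeft v).isAlt_toBilinForm.apply_eq_zero_of_mem_span_pair hvuw hx hy

/-- Over any field, for an alternating trilinear form on a vector
space of even dimension (at least 2), every one-dimensional subspace (i.e. every
nonzero vector) is contained in a two-dimensional singular subspace. -/
theorem stmt0 {K V : Type*} [Field K] [AddCommGroup V] [Module K V]
    [FiniteDimensional K V] (heven : Even (Module.finrank K V))
    (hdim : 2 ≤ Module.finrank K V)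
    (ω : AlternatingMap K V K (Fin 3)) (u : V) (hu : u ≠ 0) :
    ∃ U : Submodule K V, Module.finrank K U = 2 ∧ u ∈ U ∧
      ∀ x ∈ U, ∀ y ∈ U, ∀ v : V, ω ![x, y, v] = 0 :=
  stmt0_general heven ω u hu
end

section
/- Let V be a vector space of odd dimension n ≥ 5 over a field K, ω an alternating trilinear form on V, and u ∈ V non-zero. Then u lies in a 2-dimensional ω-singular subspace if and only if the alternating bilinear form ω_u := ω(u,·,·) has rank strictly less than n − 1. -/
/-- Let `V` have odd dimension `n ≥ 5`, `ω` an alternating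
trilinear form on `V` (given in curried form), and `u ≠ 0`.  Then `u` lies in a
2-dimensional `ω`-singular subspace iff the alternating bilinear form
`ω_u = ω(u,·,·)` has rank (= n − dim radical) strictly less than `n − 1`. -/
theorem stmt8 {K V : Type*} [Field K] [AddCommGroup V] [Module K V]
    [FiniteDimensional K V] {n : ℕ} (hn : Module.finrank K V = n)
    (hodd : Odd n) (h5 : 5 ≤ n)
    (ω : V →ₗ[K] V →ₗ[K] V →ₗ[K] K)
    (h1 : ∀ a b : V, ω a a b = 0) (h2 : ∀ a b : V, ω a b b = 0)
    (h3 : ∀ a b : V, ω a b a = 0)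
    (u : V) (hu : u ≠ 0) :
    (∃ U : Submodule K V, Module.finrank K U = 2 ∧ u ∈ U ∧
        ∀ x ∈ U, ∀ y ∈ U, ∀ v : V, ω x y v = 0) ↔
      n - Module.finrank K (LinearMap.ker (ω u)) < n - 1 := by
  have hker_le : Module.finrank K (LinearMap.ker (ω u)) ≤ n := by
    rw [← hn]; exact Submodule.finrank_le _
  -- antisymmetry in the first two slots
  have anti : ∀ a b c : V, ω b a c = - ω a b c := by
    intro a b c
    have := h1 (a + b) c
    simp only [map_add, LinearMap.add_apply] at this
    rw [h1, h1] at this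
    linear_combination this
  constructor
  · rintro ⟨U, hU2, huU, hsing⟩
    have hUker : U ≤ LinearMap.ker (ω u) := by
      intro x hx
      rw [LinearMap.mem_ker]
      ext w
      exact hsing u huU x hx w
    have : 2 ≤ Module.finrank K (LinearMap.ker (ω u)) := by
      rw [← hU2]; exact Submodule.finrank_mono hUker
    omega
  · intro hrank
    have hk2 : 2 ≤ Module.finrank K (LinearMap.ker (ω u)) := by omega
    have huk : u ∈ LinearMap.ker (ω u) := by
      rw [LinearMap.mem_ker]; ext w; exact h1 u w
    have hspan_le : Submodule.span K {u} ≤ LinearMap.ker (ω u) :=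
      Submodule.span_le.2 (Set.singleton_subset_iff.2 huk)
    have hspan1 : Module.finrank K (Submodule.span K {u}) = 1 :=
      finrank_span_singleton hu
    have hlt : Submodule.span K {u} < LinearMap.ker (ω u) := by
      refine lt_of_le_of_ne hspan_le ?_
      intro h
      rw [← h, hspan1] at hk2
      omega
    obtain ⟨v, hvk, hvs⟩ := SetLike.exists_of_lt hlt
    -- u, v are linearly independent
    have hind : LinearIndependent K ![u, v] := by
      rw [LinearIndependent.pair_iff' hu]
      intro a ha
      exact hvs (ha ▸ Submodule.smul_mem _ a (Submodule.mem_span_singleton_self u))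
    refine ⟨Submodule.span K {u, v}, ?_, Submodule.subset_span (by simp), ?_⟩
    · have h := finrank_span_eq_card hind
      have hr : Set.range ![u, v] = {u, v} := by
        ext x; simp [Matrix.range_cons, Matrix.range_empty]; tauto
      rw [hr] at h
      simpa using h
    · intro x hx y hy w
      rw [Submodule.mem_span_pair] at hx hy
      obtain ⟨a, b, rfl⟩ := hx
      obtain ⟨c, d, rfl⟩ := hy
      have hv0 : ω u v = 0 := LinearMap.mem_ker.1 hvk
      have huv : ∀ w, ω u v w = 0 := fun w => by rw [hv0]; rfl
      have hvu : ∀ w, ω v u w = 0 := fun w => by rw [anti, huv, neg_zero]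
      simp only [map_add, map_smul, LinearMap.add_apply, LinearMap.smul_apply,
        smul_eq_mul, h1, huv, hvu]
      ring
end

section
/- Let V be an n-dimensional vector space over a field K with n ≥ 3, and let s ≥ 2 satisfy C(s,2) < n. If ω is a non-degenerate alternating trilinear form on V and U ⊆ V is a 2-singular subspace for ω, then the codimension of U is at least s; equivalently, if U is 2-singular of codimension s', then C(s'+1,2) ≥ n. -/
/-!
For `u ∈ U` the contracted form `ω(u, ·, ·)` vanishes as soon as one argument lies in `U`, so it
is determined by its restriction to a complement `W` of `U`. Non-degeneracy makes
`u ↦ ω(u, ·, ·)|_W` an injection of `U` into the alternating 2-forms on `W`, a space of dimension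
`C(m, 2)` with `m = dim W = codim U`. Hence `n = dim U + m ≤ C(m, 2) + m = C(m + 1, 2)`, and
`C(s, 2) < n` forces `s ≤ m`.
-/

open Module

namespace AlternatingMap

section CommRing

variable {R V M N : Type*} [CommRing R] [AddCommGroup V] [Module R V] [AddCommGroup M]
  [Module R M] [AddCommGroup N] [Module R N]

theorem map_fin_two_swap (f : V [⋀^Fin 2]→ₗ[R] N) (x y : V) : f ![x, y] = -f ![y, x] := by
  rw [← f.map_swap ![y, x] (i := 0) (j := 1) (by decide)]
  congr 1
  ext i
  fin_cases i <;> rfl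

theorem map_fin_two_eq_zero_of_sup_eq_top (f : V [⋀^Fin 2]→ₗ[R] N) {U W : Submodule R V}
    (hUW : U ⊔ W = ⊤) (hU : ∀ a ∈ U, ∀ y, f ![a, y] = 0) (hW : f.compLinearMap W.subtype = 0)
    (x y : V) : f ![x, y] = 0 := by
  have hV : ∀ z : V, ∃ a ∈ U, ∃ b ∈ W, a + b = z := fun z =>
    Submodule.mem_sup.mp (hUW ▸ Submodule.mem_top)
  obtain ⟨a, ha, b, hb, rfl⟩ := hV x
  obtain ⟨c, hc, d, hd, rfl⟩ := hV y
  have hdb : f ![d, b] = 0 := by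
    have hvec : (fun i => ((![⟨d, hd⟩, ⟨b, hb⟩] : Fin 2 → W) i : V)) = ![d, b] := by
      ext i
      fin_cases i <;> rfl
    simpa [hvec] using AlternatingMap.congr_fun hW ![⟨d, hd⟩, ⟨b, hb⟩]
  rw [f.map_vecCons_add, hU a ha, zero_add, map_fin_two_swap, f.map_vecCons_add, hU c hc,
    zero_add, hdb, neg_zero]

def curryLeftCompLinearMap {k : ℕ} (f : V [⋀^Fin (k + 1)]→ₗ[R] N) (g : M →ₗ[R] V) :
    V →ₗ[R] M [⋀^Fin k]→ₗ[R] N where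
  toFun x := (f.curryLeft x).compLinearMap g
  map_add' _ _ := by ext; simp
  map_smul' _ _ := by ext; simp

end CommRing

section Field

variable {K V M : Type*} [Field K] [AddCommGroup V] [Module K V] [AddCommGroup M] [Module K M]

instance [FiniteDimensional K M] (k : ℕ) : FiniteDimensional K (M [⋀^Fin k]→ₗ[K] K) :=
  Module.Finite.equiv exteriorPower.alternatingMapLinearEquiv.symm

theorem finrank_eq_choose [FiniteDimensional K M] (k : ℕ) :
    finrank K (M [⋀^Fin k]→ₗ[K] K) = (finrank K M).choose k := by
  rw [exteriorPower.alternatingMapLinearEquiv.finrank_eq,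
    Subspace.dual_finrank_eq, exteriorPower.finrank_eq]

theorem finrank_le_choose_of_isCompl (ω : V [⋀^Fin 3]→ₗ[K] K)
    (hnd : ∀ v : V, (∀ w x : V, ω ![v, w, x] = 0) → v = 0) {U W : Submodule K V}
    (hUW : IsCompl U W) [FiniteDimensional K W]
    (hU : ∀ u ∈ U, ∀ u' ∈ U, ∀ v : V, ω ![u, u', v] = 0) :
    finrank K U ≤ (finrank K W).choose 2 := by
  have hinj : Function.Injective (ω.curryLeftCompLinearMap W.subtype ∘ₗ U.subtype) := by
    rw [← LinearMap.ker_eq_bot, LinearMap.ker_eq_bot']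
    intro u hu
    exact Subtype.ext (hnd u (map_fin_two_eq_zero_of_sup_eq_top (ω.curryLeft u)
      hUW.sup_eq_top (fun a ha y => hU u u.2 a ha y) hu))
  exact (LinearMap.finrank_le_finrank_of_injective hinj).trans_eq (finrank_eq_choose 2)

end Field

end AlternatingMap

theorem stmt13_general {K V : Type*} [Field K] [AddCommGroup V] [Module K V]
    [FiniteDimensional K V] {n s : ℕ} (hn : Module.finrank K V = n)
    (hsn : Nat.choose s 2 < n)
    (ω : AlternatingMap K V K (Fin 3))
    (hnd : ∀ v : V, (∀ w x : V, ω ![v, w, x] = 0) → v = 0)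
    (U : Submodule K V)
    (hU : ∀ u ∈ U, ∀ u' ∈ U, ∀ v : V, ω ![u, u', v] = 0) :
    s ≤ n - Module.finrank K U ∧
      n ≤ Nat.choose (n - Module.finrank K U + 1) 2 := by
  obtain ⟨W, hUW⟩ := U.exists_isCompl
  have hdim := Submodule.finrank_add_eq_of_isCompl hUW
  have hU_le := ω.finrank_le_choose_of_isCompl hnd hUW hU
  have hpascal : (finrank K W + 1).choose 2 = finrank K W + (finrank K W).choose 2 := by
    rw [Nat.choose_succ_succ', Nat.choose_one_right]
  have hcodim : n - finrank K U = finrank K W := by omega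
  rw [hcodim]
  refine ⟨?_, by omega⟩
  by_contra! hlt
  have := Nat.choose_le_choose 2 (show finrank K W + 1 ≤ s by omega)
  omega

/-- Let `dim V = n ≥ 3` and `s ≥ 2` with `C(s,2) < n`.  If `ω`
is a non-degenerate alternating trilinear form on `V` and `U` is a 2-singular
subspace for `ω`, then the codimension of `U` is at least `s`; equivalently, the
codimension `s'` of `U` satisfies `C(s'+1,2) ≥ n`. -/
theorem stmt13 {K V : Type*} [Field K] [AddCommGroup V] [Module K V]
    [FiniteDimensional K V] {n s : ℕ} (hn : Module.finrank K V = n)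
    (h3 : 3 ≤ n) (hs : 2 ≤ s) (hsn : Nat.choose s 2 < n)
    (ω : AlternatingMap K V K (Fin 3))
    (hnd : ∀ v : V, (∀ w x : V, ω ![v, w, x] = 0) → v = 0)
    (U : Submodule K V)
    (hU : ∀ u ∈ U, ∀ u' ∈ U, ∀ v : V, ω ![u, u', v] = 0) :
    s ≤ n - Module.finrank K U ∧
      n ≤ Nat.choose (n - Module.finrank K U + 1) 2 :=
  stmt13_general hn hsn ω hnd U hU
end

section
/- Let V be a vector space of dimension n = C(s+1,2) over a field K (s ≥ 2, n ≥ 3). Then all non-degenerate alternating trilinear forms on V possessing a 2-singular subspace of codimension s form a single orbit under the action of GL(V). -/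
/-!
Let `U` be 2-singular of codimension `s` and `W` a complement with basis `w₁, …, wₛ`. Because
`ω(U, U, V) = 0`, nondegeneracy forces `u ↦ (ω(u, w_a, w_b))_{a<b}` to be injective on `U`, and
since `dim U = C(s, 2)` it is an isomorphism onto `K^{C(s,2)}`. Replacing each `w_k` by
`w_k + d_k` with `d_k ∈ U` leaves these pairings unchanged and can be arranged to kill `ω` on the
new complement. In the basis formed by the corrected `w_k` and the vectors `u_{ab} ∈ U` dual to
the pairing, the only nonzero structure constants are `ω(w_a, w_b, u_{ab}) = 1`, so any two such
forms have the same structure constants and are related by the change of basis.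
-/

open Module

namespace AlternatingMap

variable {R M N : Type*} [CommRing R] [AddCommGroup M] [Module R M] [AddCommGroup N] [Module R N]
variable (ω : M [⋀^Fin 3]→ₗ[R] N)

lemma map_add₀ (x x' y z : M) : ω ![x + x', y, z] = ω ![x, y, z] + ω ![x', y, z] :=
  ω.map_vecCons_add _ _ _

lemma map_add₁ (x y y' z : M) : ω ![x, y + y', z] = ω ![x, y, z] + ω ![x, y', z] :=
  (ω.curryLeft x).map_vecCons_add _ _ _

lemma map_add₂ (x y z z' : M) : ω ![x, y, z + z'] = ω ![x, y, z] + ω ![x, y, z'] :=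
  ((ω.curryLeft x).curryLeft y).map_vecCons_add _ _ _

lemma map_swap₀₁ (x y z : M) : ω ![y, x, z] = -ω ![x, y, z] := by
  convert ω.map_swap ![x, y, z] (i := 0) (j := 1) (by decide) using 2
  ext i; fin_cases i <;> rfl

lemma map_swap₁₂ (x y z : M) : ω ![x, z, y] = -ω ![x, y, z] := by
  convert ω.map_swap ![x, y, z] (i := 1) (j := 2) (by decide) using 2
  ext i; fin_cases i <;> rfl

lemma map_rotate (x y z : M) : ω ![y, z, x] = ω ![x, y, z] := by
  rw [map_swap₁₂ ω y x z, map_swap₀₁, neg_neg]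

lemma compLinearMap_apply_three (g : M →ₗ[R] M) (x y z : M) :
    ω.compLinearMap g ![x, y, z] = ω ![g x, g y, g z] := by
  rw [compLinearMap_apply]
  exact congrArg ω (FinVec.map_eq g ![x, y, z]).symm

lemma curryLeft_compLinearMap_apply_two {P : Type*} [AddCommGroup P] [Module R P]
    (g : P →ₗ[R] M) (u : M) (a b : P) :
    (ω.curryLeft u).compLinearMap g ![a, b] = ω ![u, g a, g b] := by
  rw [compLinearMap_apply, curryLeft_apply_apply]
  exact congrArg (fun t => ω (Matrix.vecCons u t)) (FinVec.map_eq g ![a, b]).symm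

def IsTwoSingular (U : Submodule R M) : Prop :=
  ∀ u ∈ U, ∀ u' ∈ U, ∀ v, ω ![u, u', v] = 0

namespace IsTwoSingular

variable {ω} {U : Submodule R M} (hU : ω.IsTwoSingular U)
include hU

lemma map_eq_zero₀₂ {u u' : M} (hu : u ∈ U) (hu' : u' ∈ U) (x : M) : ω ![u, x, u'] = 0 := by
  rw [map_swap₁₂, hU u hu u' hu', neg_zero]

lemma map_eq_zero₁₂ {u u' : M} (hu : u ∈ U) (hu' : u' ∈ U) (x : M) : ω ![x, u, u'] = 0 := by
  rw [← map_rotate, hU u hu u' hu']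

lemma map_add_add {u d d' : M} (hu : u ∈ U) (hd : d ∈ U) (hd' : d' ∈ U) (x y : M) :
    ω ![u, x + d, y + d'] = ω ![u, x, y] := by
  rw [map_add₁, map_add₂, map_add₂, hU.map_eq_zero₀₂ hu hd', hU u hu d hd, hU u hu d hd]
  abel

lemma map_add_add_add {u₁ u₂ u₃ : M} (hu₁ : u₁ ∈ U) (hu₂ : u₂ ∈ U) (hu₃ : u₃ ∈ U)
    (x₁ x₂ x₃ : M) :
    ω ![x₁ + u₁, x₂ + u₂, x₃ + u₃] =
      ω ![x₁, x₂, x₃] + ω ![u₁, x₂, x₃] - ω ![u₂, x₁, x₃] + ω ![u₃, x₁, x₂] := by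
  rw [map_add₀, hU.map_add_add hu₁ hu₂ hu₃, map_add₁, map_add₂, map_add₂,
    hU.map_eq_zero₁₂ hu₂ hu₃, map_rotate ω u₃ x₁ x₂, map_swap₀₁ ω u₂ x₁ x₃]
  abel

end IsTwoSingular

end AlternatingMap

namespace Module.Basis

section Alternating

variable {R M N ι : Type*} [CommRing R] [AddCommGroup M] [Module R M] [AddCommGroup N]
  [Module R N] [LinearOrder ι]

theorem ext_alternating_of_strictMono {n : ℕ} {f g : M [⋀^Fin n]→ₗ[R] N} (e : Basis ι R M)
    (h : ∀ v : Fin n → ι, StrictMono v → f (e ∘ v) = g (e ∘ v)) : f = g := by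
  refine e.ext_alternating fun v hv => ?_
  set σ := Tuple.sort v
  have hσ : StrictMono (v ∘ σ) :=
    (Tuple.monotone_sort v).strictMono_of_injective (hv.comp σ.injective)
  have := h _ hσ
  rw [← Function.comp_assoc, f.map_perm, g.map_perm] at this
  exact MulAction.injective (Equiv.Perm.sign σ) this

theorem ext_alternating_three {f g : M [⋀^Fin 3]→ₗ[R] N} (e : Basis ι R M)
    (h : ∀ i j k, i < j → j < k → f ![e i, e j, e k] = g ![e i, e j, e k]) : f = g :=
  e.ext_alternating_of_strictMono fun v hv => by
    rw [← FinVec.etaExpand_eq (e ∘ v)]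
    exact h _ _ _ (hv (by decide)) (hv (by decide))

end Alternating

section Shear

variable {R M ι κ : Type*} [Ring R] [AddCommGroup M] [Module R M] {W U : Submodule R M}

noncomputable def shear (hWU : IsCompl W U) (w : Basis ι R W) (bU : Basis κ R U)
    (D : W →ₗ[R] U) : Basis (Lex (ι ⊕ κ)) R M :=
  (((w.prod bU).map ((LinearEquiv.refl R W).skewProd (LinearEquiv.refl R U) D)).map
    (Submodule.prodEquivOfIsCompl W U hWU)).reindex toLex

variable (hWU : IsCompl W U) (w : Basis ι R W) (bU : Basis κ R U) (D : W →ₗ[R] U)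

@[simp] lemma shear_inl (i : ι) : shear hWU w bU D (toLex (.inl i)) = w i + D (w i) := by
  simp [shear]

@[simp] lemma shear_inr (k : κ) : shear hWU w bU D (toLex (.inr k)) = bU k := by
  simp [shear]

end Shear

end Module.Basis

namespace TrivectorNormalForm

open AlternatingMap

abbrev PairIdx (s : ℕ) := {p : Fin s ×ₗ Fin s // (ofLex p).1 < (ofLex p).2}

abbrev Idx (s : ℕ) := Lex (Fin s ⊕ PairIdx s)

lemma card_pairIdx (s : ℕ) : Fintype.card (PairIdx s) = s.choose 2 := by
  rw [Fintype.card_congr (ofLex.subtypeEquiv (q := fun p : Fin s × Fin s => p.1 < p.2)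
      fun _ => Iff.rfl), Fintype.card_subtype, ← Finset.univ_product_univ,
    Finset.card_product_filter_lt, Finset.card_univ, Fintype.card_fin]

variable {K V : Type*} [Field K] [AddCommGroup V] [Module K V] {s : ℕ}

variable (K s) in
/-- Structure constants of the normal form on increasing triples: `inl a` indexes `w_a` and
`inr p` the vector `u_p ∈ U` dual to the pair `p`. -/
def model (i j k : Idx s) : K :=
  match ofLex i, ofLex j, ofLex k with
  | .inl a, .inl b, .inr p => if p.1 = toLex (a, b) then 1 else 0
  | _, _, _ => 0

def pairing (ω : V [⋀^Fin 3]→ₗ[K] K) (w : Fin s → V) : V →ₗ[K] PairIdx s → K where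
  toFun x p := ω ![x, w (ofLex p.1).1, w (ofLex p.1).2]
  map_add' x y := funext fun _ => ω.map_vecCons_add _ x y
  map_smul' c x := funext fun _ => ω.map_vecCons_smul _ c x

lemma pairing_injective {ω : V [⋀^Fin 3]→ₗ[K] K}
    (hnd : ∀ v : V, (∀ w x : V, ω ![v, w, x] = 0) → v = 0) {U W : Submodule K V}
    (hU : ω.IsTwoSingular U) (hWU : W ⊔ U = ⊤) (w : Basis (Fin s) K W) :
    Function.Injective ((pairing ω (W.subtype ∘ w)).domRestrict U) := by
  rw [← LinearMap.ker_eq_bot, LinearMap.ker_eq_bot']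
  rintro ⟨u, hu⟩ hpair
  have hW : ∀ y ∈ W, ∀ y' ∈ W, ω ![u, y, y'] = 0 := by
    have hβ : (ω.curryLeft u).compLinearMap W.subtype = 0 :=
      w.ext_alternating_of_strictMono fun v hv => by
        rw [← FinVec.etaExpand_eq (w ∘ v)]
        exact (curryLeft_compLinearMap_apply_two ω _ u _ _).trans
          (congrFun hpair ⟨toLex (v 0, v 1), hv (by decide)⟩)
    intro y hy y' hy'
    have := DFunLike.congr_fun hβ ![⟨y, hy⟩, ⟨y', hy'⟩]
    rwa [curryLeft_compLinearMap_apply_two, AlternatingMap.zero_apply] at this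
  have hsplit : ∀ x : V, ∃ y ∈ W, ∃ d ∈ U, y + d = x := fun x =>
    Submodule.mem_sup.mp (hWU ▸ Submodule.mem_top)
  refine Subtype.ext (hnd u fun x x' => ?_)
  obtain ⟨y, hy, d, hd, rfl⟩ := hsplit x
  obtain ⟨y', hy', d', hd', rfl⟩ := hsplit x'
  rw [hU.map_add_add hu hd hd']
  exact hW y hy y' hy'

lemma map_eq_model {ω : V [⋀^Fin 3]→ₗ[K] K} {U : Submodule K V} (hU : ω.IsTwoSingular U)
    (b : Idx s → V) (hbU : ∀ p, b (toLex (.inr p)) ∈ U)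
    (hdual : ∀ p a c, a < c → ω ![b (toLex (.inr p)), b (toLex (.inl a)), b (toLex (.inl c))] =
      if p.1 = toLex (a, c) then 1 else 0)
    (hW : ∀ a c e, a < c → c < e →
      ω ![b (toLex (.inl a)), b (toLex (.inl c)), b (toLex (.inl e))] = 0)
    (i j k : Idx s) (hij : i < j) (hjk : j < k) : ω ![b i, b j, b k] = model K s i j k := by
  obtain ⟨a | p, rfl⟩ := toLex.surjective i <;> obtain ⟨c | q, rfl⟩ := toLex.surjective j <;>
    obtain ⟨e | r, rfl⟩ := toLex.surjective k
  · exact hW a c e (Sum.Lex.inl_lt_inl_iff.mp hij) (Sum.Lex.inl_lt_inl_iff.mp hjk)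
  · rw [map_rotate ω (b (toLex (.inr r))), hdual r a c (Sum.Lex.inl_lt_inl_iff.mp hij)]
    rfl
  · exact absurd hjk Sum.Lex.not_inr_lt_inl
  · exact hU.map_eq_zero₁₂ (hbU q) (hbU r) _
  · exact absurd hij Sum.Lex.not_inr_lt_inl
  · exact absurd hij Sum.Lex.not_inr_lt_inl
  · exact absurd hjk Sum.Lex.not_inr_lt_inl
  · exact hU _ (hbU p) _ (hbU q) _

/-- Only the smallest index of an increasing triple `a < b < c` is corrected, so exactly one
correction term meets `ω(w_a, w_b, w_c)` and cancels it; no division is needed. -/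
def correction (ω : V [⋀^Fin 3]→ₗ[K] K) (w : Fin s → V) (k : Fin s) (p : PairIdx s) : K :=
  if k < (ofLex p.1).1 then -ω ![w k, w (ofLex p.1).1, w (ofLex p.1).2] else 0

theorem exists_basis_map_eq_model [FiniteDimensional K V] {ω : V [⋀^Fin 3]→ₗ[K] K}
    (hnd : ∀ v : V, (∀ w x : V, ω ![v, w, x] = 0) → v = 0) {U : Submodule K V}
    (hU : ω.IsTwoSingular U) (hUdim : finrank K U = s.choose 2)
    (hVdim : finrank K V = s.choose 2 + s) :
    ∃ b : Basis (Idx s) K V,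
      ∀ i j k, i < j → j < k → ω ![b i, b j, b k] = model K s i j k := by
  obtain ⟨W, hUW⟩ := U.exists_isCompl
  have hWdim : finrank K W = s := by
    have := Submodule.finrank_add_eq_of_isCompl hUW
    omega
  let w := finBasisOfFinrankEq K W hWdim
  let E : U ≃ₗ[K] (PairIdx s → K) :=
    LinearMap.linearEquivOfInjective _ (pairing_injective hnd hU hUW.symm.sup_eq_top w)
      (by rw [hUdim, finrank_fintype_fun_eq_card, card_pairIdx])
  have hE : ∀ (u : U) a c (hac : a < c), ω ![u, w a, w c] = E u ⟨toLex (a, c), hac⟩ :=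
    fun _ _ _ _ => rfl
  let D : W →ₗ[K] U := w.constr K fun k => E.symm (correction ω (W.subtype ∘ w) k)
  have hD : ∀ k, E (D (w k)) = correction ω (W.subtype ∘ w) k := fun k => by
    simp [D, w.constr_basis]
  refine ⟨Basis.shear hUW.symm w ((Pi.basisFun K _).map E.symm) D,
    map_eq_model hU _ (fun p => by simp) (fun p a c hac => ?_) (fun a c e hac hce => ?_)⟩
  · simp only [Basis.shear_inl, Basis.shear_inr, Basis.map_apply, Pi.basisFun_apply]
    rw [hU.map_add_add (Submodule.coe_mem _) (Submodule.coe_mem _) (Submodule.coe_mem _),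
      hE _ a c hac, E.apply_symm_apply, Pi.single_apply]
    exact if_congr (Subtype.ext_iff.trans eq_comm) rfl rfl
  · simp only [Basis.shear_inl]
    rw [hU.map_add_add_add (Submodule.coe_mem _) (Submodule.coe_mem _) (Submodule.coe_mem _),
      hE _ c e hce, hE _ a e (hac.trans hce), hE _ a c hac, hD, hD, hD]
    simp [correction, hac, hac.not_gt, (hac.trans hce).not_gt]

end TrivectorNormalForm

theorem stmt15_general {K V : Type*} [Field K] [AddCommGroup V] [Module K V]
    [FiniteDimensional K V] {n s : ℕ} (hn : Module.finrank K V = n)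
    (hns : n = Nat.choose (s + 1) 2)
    (ω ω' : AlternatingMap K V K (Fin 3))
    (hnd : ∀ v : V, (∀ w x : V, ω ![v, w, x] = 0) → v = 0)
    (hnd' : ∀ v : V, (∀ w x : V, ω' ![v, w, x] = 0) → v = 0)
    (hU : ∃ U : Submodule K V, Module.finrank K U = n - s ∧
      ∀ u ∈ U, ∀ u' ∈ U, ∀ v : V, ω ![u, u', v] = 0)
    (hU' : ∃ U : Submodule K V, Module.finrank K U = n - s ∧
      ∀ u ∈ U, ∀ u' ∈ U, ∀ v : V, ω' ![u, u', v] = 0) :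
    ∃ g : V ≃ₗ[K] V, ∀ u v w : V, ω' ![u, v, w] = ω ![g u, g v, g w] := by
  have hVdim : finrank K V = s.choose 2 + s := by
    rw [hn, hns, Nat.choose_succ_succ', Nat.choose_one_right, add_comm]
  obtain ⟨U, hUdim, hU⟩ := hU
  obtain ⟨U', hUdim', hU'⟩ := hU'
  obtain ⟨b, hb⟩ := TrivectorNormalForm.exists_basis_map_eq_model hnd hU (by omega) hVdim
  obtain ⟨b', hb'⟩ := TrivectorNormalForm.exists_basis_map_eq_model hnd' hU' (by omega) hVdim
  let g := b'.equiv b (Equiv.refl _)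
  have hω' : ω' = ω.compLinearMap (g : V →ₗ[K] V) :=
    b'.ext_alternating_three fun i j k hij hjk => by
      rw [AlternatingMap.compLinearMap_apply_three, hb' i j k hij hjk]
      simpa [g] using (hb i j k hij hjk).symm
  exact ⟨g, fun u v w => by rw [hω', AlternatingMap.compLinearMap_apply_three]; rfl⟩

/-- Let `dim V = n = C(s+1,2)` with `s ≥ 2`, `n ≥ 3`.  Then all
non-degenerate alternating trilinear forms on `V` possessing a 2-singular
subspace of codimension `s` lie in a single `GL(V)`-orbit: any two such forms are
related by a linear automorphism of `V`. -/
theorem stmt15 {K V : Type*} [Field K] [AddCommGroup V] [Module K V]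
    [FiniteDimensional K V] {n s : ℕ} (hn : Module.finrank K V = n)
    (h3 : 3 ≤ n) (hs : 2 ≤ s) (hns : n = Nat.choose (s + 1) 2)
    (ω ω' : AlternatingMap K V K (Fin 3))
    (hnd : ∀ v : V, (∀ w x : V, ω ![v, w, x] = 0) → v = 0)
    (hnd' : ∀ v : V, (∀ w x : V, ω' ![v, w, x] = 0) → v = 0)
    (hU : ∃ U : Submodule K V, Module.finrank K U = n - s ∧
      ∀ u ∈ U, ∀ u' ∈ U, ∀ v : V, ω ![u, u', v] = 0)
    (hU' : ∃ U : Submodule K V, Module.finrank K U = n - s ∧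
      ∀ u ∈ U, ∀ u' ∈ U, ∀ v : V, ω' ![u, u', v] = 0) :
    ∃ g : V ≃ₗ[K] V, ∀ u v w : V, ω' ![u, v, w] = ω ![g u, g v, g w] :=
  stmt15_general hn hns ω ω' hnd hnd' hU hU'
end

section
/- Let W be an s-dimensional K-vector space with s ≥ 3, V = Λ²W* ⊕ W, and ω the trilinear form with ω(μ,w₁,w₂)=μ(w₁,w₂) and vanishing on Λ²W*×Λ²W*×V and W×W×W. Then Λ²W* is the unique 2-singular subspace of V of codimension s. -/
/-!
Suppose some `u ∈ U` has nonzero `W`-component `w`. Pairing `u` with `U` against `Λ²W*` shows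
that every element of `U` has `W`-component in `K ∙ w` (a wedge `g ∧ f` of functionals detects
vectors outside `K ∙ w`), and pairing against `W` shows that the elements of `U` lying in `Λ²W*`
are killed by the contraction `ν ↦ ν(·, w)`. That contraction hits the whole `(s-1)`-dimensional
annihilator of `w` (as `f ∧ g ↦ f` when `f w = 0`, `g w = 1`), so
`dim U ≤ dim Λ²W* - (s - 1) + 1 < dim Λ²W*` once `s ≥ 3`. Hence `U ⊆ Λ²W*`, and equality
follows by dimension.
-/

/-- The alternating trilinear form on `V = Λ²W* ⊕ W` determined by
`ω(μ₁,μ₂,·) = 0`, `ω(μ,w₁,w₂) = μ(w₁,w₂)` and `ω(w₁,w₂,w₃) = 0`. -/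
def ωSplit {K W : Type*} [Field K] [AddCommGroup W] [Module K W]
    (x y z : AlternatingMap K W K (Fin 2) × W) : K :=
  x.1 ![y.2, z.2] + y.1 ![z.2, x.2] + z.1 ![x.2, y.2]

open Module

@[simp]
lemma AlternatingMap.apply_zero_vecCons {R M N : Type*} [Semiring R] [AddCommMonoid M]
    [Module R M] [AddCommMonoid N] [Module R N] (ν : AlternatingMap R M N (Fin 2)) (v : M) :
    ν ![0, v] = 0 :=
  ν.map_coord_zero 0 rfl

@[simp]
lemma AlternatingMap.apply_vecCons_zero {R M N : Type*} [Semiring R] [AddCommMonoid M]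
    [Module R M] [AddCommMonoid N] [Module R N] (ν : AlternatingMap R M N (Fin 2)) (v : M) :
    ν ![v, 0] = 0 :=
  ν.map_coord_zero 1 rfl

section

variable {K W : Type*} [Field K] [AddCommGroup W] [Module K W]

local notation "Λ²W*" => AlternatingMap K W K (Fin 2)

instance (n : ℕ) [FiniteDimensional K W] : FiniteDimensional K (AlternatingMap K W K (Fin n)) :=
  exteriorPower.alternatingMapLinearEquiv.symm.finiteDimensional

noncomputable def wedge (f g : Dual K W) : Λ²W* :=
  (exteriorPower.alternatingMapToDual K W 2 ![f, g]).compAlternatingMap (exteriorPower.ιMulti K 2)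

lemma wedge_apply (f g : Dual K W) (v w : W) : wedge f g ![v, w] = f v * g w - g v * f w := by
  simp [wedge, Matrix.det_fin_two]

variable (K) in
def contract (w : W) : Λ²W* →ₗ[K] Dual K W where
  toFun ν :=
    { toFun := fun z => ν ![z, w]
      map_add' := fun z z' => ν.map_vecCons_add ![w] z z'
      map_smul' := fun c z => ν.map_vecCons_smul ![w] c z }
  map_add' _ _ := rfl
  map_smul' _ _ := rfl

@[simp]
lemma contract_apply (w z : W) (ν : Λ²W*) : contract K w ν z = ν ![z, w] := rfl

lemma mem_span_singleton_of_forall_alternatingMap_eq_zero {w v : W} (hw : w ≠ 0)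
    (h : ∀ ν : Λ²W*, ν ![w, v] = 0) : v ∈ K ∙ w := by
  by_contra hv
  obtain ⟨f, hfv, hfw⟩ := Submodule.exists_dual_map_eq_bot_of_notMem hv inferInstance
  obtain ⟨g, hgw⟩ := Projective.exists_dual_eq_one K hw
  have hfw : f w = 0 := by
    simpa [hfw] using Submodule.mem_map_of_mem (f := f) (Submodule.mem_span_singleton_self w)
  simpa [wedge_apply, hgw, hfw, hfv] using h (wedge g f)

lemma dualAnnihilator_span_singleton_le_range_contract {w : W} (hw : w ≠ 0) :
    (K ∙ w).dualAnnihilator ≤ LinearMap.range (contract K w) := by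
  obtain ⟨g, hgw⟩ := Projective.exists_dual_eq_one K hw
  intro f hf
  have hfw : f w = 0 :=
    (Submodule.mem_dualAnnihilator f).mp hf w (Submodule.mem_span_singleton_self w)
  exact ⟨wedge f g, by ext z; simp [wedge_apply, hgw, hfw]⟩

lemma finrank_ker_contract_add_le [FiniteDimensional K W] {w : W} (hw : w ≠ 0) :
    finrank K (LinearMap.ker (contract K w)) + (finrank K W - 1) ≤ finrank K Λ²W* := by
  have hann := Subspace.finrank_add_finrank_dualAnnihilator_eq (K := K) (K ∙ w)
  rw [finrank_span_singleton hw] at hann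
  have hrange :=
    Submodule.finrank_mono (dualAnnihilator_span_singleton_le_range_contract (K := K) hw)
  have := (contract K w).finrank_range_add_finrank_ker
  omega

def IsTwoSingular (U : Submodule K (Λ²W* × W)) : Prop :=
  ∀ u ∈ U, ∀ u' ∈ U, ∀ v, ωSplit u u' v = 0

lemma ωSplit_inl (x y : Λ²W* × W) (ν : Λ²W*) : ωSplit x y (ν, 0) = ν ![x.2, y.2] := by
  simp [ωSplit]

lemma ωSplit_inr_of_snd_eq_zero (x y : Λ²W* × W) (hy : y.2 = 0) (z : W) :
    ωSplit x y (0, z) = contract K x.2 y.1 z := by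
  simp [ωSplit, hy]

variable {U : Submodule K (AlternatingMap K W K (Fin 2) × W)}
  {u u' : AlternatingMap K W K (Fin 2) × W}

lemma IsTwoSingular.snd_mem_span_singleton (hU : IsTwoSingular U) (hu : u ∈ U) (hu' : u' ∈ U)
    (hu2 : u.2 ≠ 0) : u'.2 ∈ K ∙ u.2 :=
  mem_span_singleton_of_forall_alternatingMap_eq_zero hu2 fun ν => by
    simpa [ωSplit_inl] using hU u hu u' hu' (ν, 0)

lemma IsTwoSingular.fst_mem_ker_contract (hU : IsTwoSingular U) (hu : u ∈ U) (hu' : u' ∈ U)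
    (hu'2 : u'.2 = 0) : u'.1 ∈ LinearMap.ker (contract K u.2) := by
  ext z
  simpa [ωSplit_inr_of_snd_eq_zero u u' hu'2] using hU u hu u' hu' (0, z)

lemma IsTwoSingular.le_map_inl_sup_span_singleton (hU : IsTwoSingular U) (hu : u ∈ U)
    (hu2 : u.2 ≠ 0) :
    U ≤ (LinearMap.ker (contract K u.2)).map (LinearMap.inl K _ W) ⊔ K ∙ u := by
  intro u' hu'
  obtain ⟨c, hc⟩ := Submodule.mem_span_singleton.mp (hU.snd_mem_span_singleton hu hu' hu2)
  have hsnd : (u' - c • u).2 = 0 := by simp [← hc]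
  have hker := hU.fst_mem_ker_contract hu (U.sub_mem hu' (U.smul_mem c hu)) hsnd
  rw [← sub_add_cancel u' (c • u)]
  exact add_mem (Submodule.mem_sup_left ⟨_, hker, Prod.ext rfl hsnd.symm⟩)
    (Submodule.mem_sup_right (Submodule.smul_mem _ c (Submodule.mem_span_singleton_self u)))

lemma IsTwoSingular.finrank_add_le [FiniteDimensional K W] (hU : IsTwoSingular U) (hu : u ∈ U)
    (hu2 : u.2 ≠ 0) : finrank K U + (finrank K W - 1) ≤ finrank K Λ²W* + 1 := by
  have hcontract := finrank_ker_contract_add_le (K := K) hu2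
  have hspan : finrank K (K ∙ u) = 1 := finrank_span_singleton fun h => hu2 (by simp [h])
  have := calc finrank K U
      ≤ finrank K ↥((LinearMap.ker (contract K u.2)).map (LinearMap.inl K _ W) ⊔ K ∙ u) :=
        Submodule.finrank_mono (hU.le_map_inl_sup_span_singleton hu hu2)
    _ ≤ finrank K ↥((LinearMap.ker (contract K u.2)).map (LinearMap.inl K _ W)) + 1 :=
        hspan ▸ Submodule.finrank_add_le_finrank_add_finrank _ _
    _ ≤ finrank K (LinearMap.ker (contract K u.2)) + 1 := by
        gcongr
        exact Submodule.finrank_map_le _ _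
  omega

lemma IsTwoSingular.le_ker_snd [FiniteDimensional K W] (hU : IsTwoSingular U)
    (hdim : finrank K Λ²W* ≤ finrank K U) (hW : 3 ≤ finrank K W) :
    U ≤ LinearMap.ker (LinearMap.snd K Λ²W* W) := by
  intro u hu
  by_contra hu2
  have := hU.finrank_add_le hu hu2
  omega

end

/-- For `dim W = s ≥ 3`, the subspace `Λ²W*` is the unique
2-singular subspace of `V = Λ²W* ⊕ W` of codimension `s` for `ωSplit`. -/
theorem stmt17 {K W : Type*} [Field K] [AddCommGroup W] [Module K W]
    [FiniteDimensional K W] {s : ℕ} (hs : 3 ≤ s) (hW : Module.finrank K W = s)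
    (U : Submodule K (AlternatingMap K W K (Fin 2) × W))
    (hcodim : Module.finrank K U =
      Module.finrank K (AlternatingMap K W K (Fin 2) × W) - s)
    (hsing : ∀ u ∈ U, ∀ u' ∈ U, ∀ v, ωSplit u u' v = 0) :
    U = LinearMap.ker (LinearMap.snd K (AlternatingMap K W K (Fin 2)) W) := by
  have hU : finrank K U = finrank K (AlternatingMap K W K (Fin 2)) := by
    rw [hcodim, finrank_prod, hW, Nat.add_sub_cancel]
  refine Submodule.eq_of_le_of_finrank_le (IsTwoSingular.le_ker_snd hsing hU.ge (hW ▸ hs)) ?_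
  rw [LinearMap.ker_snd, LinearMap.finrank_range_of_inj LinearMap.inl_injective, hU]
end
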